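/- For ε1, ε2 ∈ [0,1], let (W⁻, W⁺) be the irregular kernel transform of BEC(ε1) and BEC(ε2). Then I(W⁻) = (1−ε1)·(1−ε2) = I(BEC(ε1))·I(BEC(ε2)) and I(W⁺) = 1 − ε1·ε2 = I(BEC(ε1)) + I(BEC(ε2)) − I(BEC(ε1))·I(BEC(ε2)). -/

import Mathlib

/-!
Split the symmetric capacity into per-output contributions `symCapTerm (W y 0) (W y 1)`. An
output with equal likelihoods (an erasure) contributes `0`; an output with a vanishing likelihood
reveals the input and contributes half its total mass. Every output of `BEC ε`, and of both
channels of the kernel transform of two BECs, is of one of these two kinds, so each capacity is the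
probability of no erasure: `W⁻` erases unless both components arrive, while `W⁺`, which is also
told `u1`, erases only when both do.
-/

open Finset Real

/-- Symmetric capacity I(W). -/
noncomputable def symCap {Y : Type*} [Fintype Y] (W : Y → ZMod 2 → ℝ) : ℝ :=
  ∑ y, ∑ x : ZMod 2,
    (1 / 2) * W y x * Real.logb 2 (W y x / ((1 / 2) * (W y 0 + W y 1)))

/-- The minus-channel W⁻ of the irregular kernel transform. -/
noncomputable def Wminus {Y1 Y2 : Type*} (W1 : Y1 → ZMod 2 → ℝ)
    (W2 : Y2 → ZMod 2 → ℝ) : Y1 × Y2 → ZMod 2 → ℝ :=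
  fun y u1 => ∑ u2 : ZMod 2, (1 / 2) * W1 y.1 (u1 + u2) * W2 y.2 u2

/-- The plus-channel W⁺ of the irregular kernel transform. -/
noncomputable def Wplus {Y1 Y2 : Type*} (W1 : Y1 → ZMod 2 → ℝ)
    (W2 : Y2 → ZMod 2 → ℝ) : Y1 × Y2 × ZMod 2 → ZMod 2 → ℝ :=
  fun y u2 => (1 / 2) * W1 y.1 (y.2.2 + u2) * W2 y.2.1 u2

/-- The binary erasure channel with erasure probability ε. -/
noncomputable def BEC (ε : ℝ) : Option (ZMod 2) → ZMod 2 → ℝ :=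
  fun y x => match y with
    | some v => if v = x then 1 - ε else 0
    | none => ε

noncomputable def symCapTerm (a b : ℝ) : ℝ :=
  1 / 2 * a * logb 2 (a / (1 / 2 * (a + b))) + 1 / 2 * b * logb 2 (b / (1 / 2 * (a + b)))

lemma symCap_eq_sum_symCapTerm {Y : Type*} [Fintype Y] (W : Y → ZMod 2 → ℝ) :
    symCap W = ∑ y, symCapTerm (W y 0) (W y 1) :=
  Fintype.sum_congr _ _ fun _ => Fin.sum_univ_two _

lemma symCapTerm_comm (a b : ℝ) : symCapTerm a b = symCapTerm b a := by
  simp only [symCapTerm, add_comm a b]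
  ring

lemma symCapTerm_self (a : ℝ) : symCapTerm a a = 0 := by
  rcases eq_or_ne a 0 with rfl | ha
  · simp [symCapTerm]
  · have : a / (1 / 2 * (a + a)) = 1 := by field_simp; ring
    simp only [symCapTerm, this, logb_one, mul_zero, add_zero]

lemma symCapTerm_zero_right (a : ℝ) : symCapTerm a 0 = a / 2 := by
  rcases eq_or_ne a 0 with rfl | ha
  · simp [symCapTerm]
  · have : a / (1 / 2 * a) = 2 := by field_simp
    simp only [symCapTerm, add_zero, this, logb_self_eq_one one_lt_two]
    ring

lemma symCapTerm_zero_left (b : ℝ) : symCapTerm 0 b = b / 2 := by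
  rw [symCapTerm_comm, symCapTerm_zero_right]

lemma sum_zmod_two {M : Type*} [AddCommMonoid M] (f : ZMod 2 → M) : ∑ x, f x = f 0 + f 1 :=
  Fin.sum_univ_two f

lemma BEC_none (ε : ℝ) (x : ZMod 2) : BEC ε none x = ε := rfl

lemma BEC_some (ε : ℝ) (v x : ZMod 2) : BEC ε (some v) x = if v = x then 1 - ε else 0 := rfl

lemma symCap_BEC (ε : ℝ) : symCap (BEC ε) = 1 - ε := by
  simp [symCap_eq_sum_symCapTerm, Fintype.sum_option, sum_zmod_two, BEC_none, BEC_some,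
    symCapTerm_self, symCapTerm_zero_left, symCapTerm_zero_right]

lemma symCap_Wminus_BEC (ε1 ε2 : ℝ) :
    symCap (Wminus (BEC ε1) (BEC ε2)) = (1 - ε1) * (1 - ε2) := by
  simp +decide only [symCap_eq_sum_symCapTerm, Wminus, Fintype.sum_prod_type, Fintype.sum_option,
    sum_zmod_two, BEC_none, BEC_some, one_div, zero_add, add_zero, mul_ite, ite_mul, mul_zero,
    zero_mul, ↓reduceIte, symCapTerm_self, symCapTerm_zero_right, symCapTerm_zero_left, add_halves]
  ring

lemma symCap_Wplus_BEC (ε1 ε2 : ℝ) :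
    symCap (Wplus (BEC ε1) (BEC ε2)) = 1 - ε1 * ε2 := by
  simp +decide only [symCap_eq_sum_symCapTerm, Wplus, Fintype.sum_prod_type, Fintype.sum_option,
    sum_zmod_two, BEC_none, BEC_some, one_div, zero_add, add_zero, mul_ite, ite_mul, mul_zero,
    zero_mul, zero_div, ↓reduceIte, symCapTerm_self, symCapTerm_zero_right, symCapTerm_zero_left,
    add_halves]
  ring

theorem symCap_kernel_BEC_general (ε1 ε2 : ℝ) :
    symCap (Wminus (BEC ε1) (BEC ε2)) = (1 - ε1) * (1 - ε2) ∧
    symCap (Wminus (BEC ε1) (BEC ε2)) = symCap (BEC ε1) * symCap (BEC ε2) ∧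
    symCap (Wplus (BEC ε1) (BEC ε2)) = 1 - ε1 * ε2 ∧
    symCap (Wplus (BEC ε1) (BEC ε2)) =
      symCap (BEC ε1) + symCap (BEC ε2) - symCap (BEC ε1) * symCap (BEC ε2) := by
  rw [symCap_BEC, symCap_BEC, symCap_Wminus_BEC, symCap_Wplus_BEC]
  exact ⟨rfl, rfl, rfl, by ring⟩

/-- for BECs, I(W⁻) = (1−ε1)(1−ε2) = I(BEC ε1)·I(BEC ε2) and
I(W⁺) = 1 − ε1·ε2 = I(BEC ε1) + I(BEC ε2) − I(BEC ε1)·I(BEC ε2). -/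
theorem symCap_kernel_BEC (ε1 ε2 : ℝ) (h1 : ε1 ∈ Set.Icc (0:ℝ) 1)
    (h2 : ε2 ∈ Set.Icc (0:ℝ) 1) :
    symCap (Wminus (BEC ε1) (BEC ε2)) = (1 - ε1) * (1 - ε2) ∧
    symCap (Wminus (BEC ε1) (BEC ε2)) = symCap (BEC ε1) * symCap (BEC ε2) ∧
    symCap (Wplus (BEC ε1) (BEC ε2)) = 1 - ε1 * ε2 ∧
    symCap (Wplus (BEC ε1) (BEC ε2)) =
      symCap (BEC ε1) + symCap (BEC ε2) - symCap (BEC ε1) * symCap (BEC ε2) :=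
  symCap_kernel_BEC_general ε1 ε2
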